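/- arXiv:2410.01316 — 3 statements merged into one kernel-verified Lean document; each statement's English description precedes it below -/
import Mathlib

section
/- For the generalized Riesz kernel F(t) = −t^r with r > 0 and one-dimensional sliced basis function f(t) = −(√π Γ((d+r)/2) / (Γ(d/2) Γ((r+1)/2))) t^r, and x ∈ ℝ^d nonzero, the variance E_{ξ∼U(S^{d-1})}[(f(|⟨ξ,x⟩|) − F(‖x‖))²] equals ( √π Γ(r + 1/2) Γ((d+r)/2)² / (Γ((r+1)/2)² Γ(d/2) Γ(r + d/2)) − 1 ) · F(‖x‖)². -/
open Real MeasureTheory RealInnerProductSpace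

/-- The uniform (normalized surface) probability measure on the unit sphere in `ℝ^d`. -/
noncomputable def uniformSphere (d : ℕ) :
    Measure (Metric.sphere (0 : EuclideanSpace ℝ (Fin d)) 1) :=
  ((volume : Measure (EuclideanSpace ℝ (Fin d))).toSphere Set.univ)⁻¹ •
    (volume : Measure (EuclideanSpace ℝ (Fin d))).toSphere

/-!
The spherical moments of `⟪ξ, x⟫` come from computing `∫ |⟪z, x⟫| ^ p * exp (-‖z‖ ^ 2)` over
`ℝ^d` in two ways. A reflection taking `x` to `‖x‖ • e₀` reduces it to a product of
one-dimensional Gaussian integrals, equal to `Γ((p + 1) / 2) √π ^ (d - 1) ‖x‖ ^ p`; in polar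
coordinates it factors as the spherical moment times the radial integral `Γ((p + d) / 2) / 2`.
Hence `E |⟪ξ, x⟫| ^ p = Γ((p + 1) / 2) Γ(d / 2) / (√π Γ((p + d) / 2)) ‖x‖ ^ p`.
The constant in `f` is exactly the one making `E f(|⟪ξ, x⟫|) = F ‖x‖`, so the integral is the
variance `E f(|⟪ξ, x⟫|) ^ 2 - F ‖x‖ ^ 2`, whose first term is the moment of order `2 r`.
-/

open Metric Set ProbabilityTheory

lemma integral_abs_rpow_mul_exp_neg_sq {p : ℝ} (hp : -1 < p) :
    ∫ t : ℝ, |t| ^ p * exp (-t ^ 2) = Gamma ((p + 1) / 2) := by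
  have h := integral_rpow_mul_exp_neg_rpow two_pos hp
  simp only [rpow_two] at h
  have habs : ∫ t : ℝ, |t| ^ p * exp (-t ^ 2) = ∫ t : ℝ, |t| ^ p * exp (-|t| ^ 2) := by
    simp only [sq_abs]
  rw [habs, integral_comp_abs (f := fun t => t ^ p * exp (-t ^ 2)), h]
  ring

lemma integral_rpow_mul_exp_neg_sq_volumeIoiPow (k : ℕ) {p : ℝ} (hp : -(k + 1 : ℝ) < p) :
    ∫ t : Ioi (0 : ℝ), (t : ℝ) ^ p * exp (-(t : ℝ) ^ 2) ∂(Measure.volumeIoiPow k) =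
      Gamma ((p + k + 1) / 2) / 2 := by
  have hdensity : ∀ t ∈ Ioi (0 : ℝ), (t ^ k).toNNReal • (t ^ p * exp (-t ^ 2)) =
      t ^ (p + k) * exp (-t ^ (2 : ℝ)) := by
    intro t ht
    rw [NNReal.smul_def, coe_toNNReal _ (pow_nonneg (le_of_lt ht) _), smul_eq_mul,
      rpow_add ht, rpow_natCast, rpow_two]
    ring
  simp only [Measure.volumeIoiPow, ENNReal.ofReal]
  rw [integral_withDensity_eq_integral_smul (measurable_subtype_coe.pow_const _).real_toNNReal,
    integral_subtype_comap measurableSet_Ioi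
      (fun t : ℝ => (t ^ k).toNNReal • (t ^ p * exp (-t ^ 2))),
    setIntegral_congr_fun measurableSet_Ioi hdensity,
    integral_rpow_mul_exp_neg_rpow two_pos (by linarith)]
  ring_nf

section InnerProductSpace

variable {E : Type*} [NormedAddCommGroup E] [InnerProductSpace ℝ E] [FiniteDimensional ℝ E]
  [MeasurableSpace E] [BorelSpace E]

lemma integral_comp_inner_mul_exp_neg_norm_sq_of_norm_eq (g : ℝ → ℝ) {u v : E}
    (h : ‖u‖ = ‖v‖) :
    ∫ z, g ⟪z, u⟫ * exp (-‖z‖ ^ 2) = ∫ z, g ⟪z, v⟫ * exp (-‖z‖ ^ 2) := by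
  set e := (ℝ ∙ (u - v))ᗮ.reflection
  have hinner : ∀ z, ⟪e z, v⟫ = ⟪z, u⟫ := fun z => by
    rw [← Submodule.reflection_sub h, LinearIsometryEquiv.inner_map_map]
  rw [← e.measurePreserving.integral_comp e.toHomeomorph.measurableEmbedding
    (fun z => g ⟪z, v⟫ * exp (-‖z‖ ^ 2))]
  simp only [hinner, LinearIsometryEquiv.norm_map]

lemma integral_mul_exp_neg_norm_sq_of_homogeneous [Nontrivial E] {p : ℝ}
    (hp : -(Module.finrank ℝ E : ℝ) < p) (φ : E → ℝ)
    (hφ : ∀ t : ℝ, 0 < t → ∀ z, φ (t • z) = t ^ p * φ z) :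
    ∫ z, φ z * exp (-‖z‖ ^ 2) =
      (∫ ξ : sphere (0 : E) 1, φ ξ ∂(volume : Measure E).toSphere) *
        (Gamma ((p + Module.finrank ℝ E) / 2) / 2) := by
  set n := Module.finrank ℝ E
  have hn : 0 < n := Module.finrank_pos
  set G : sphere (0 : E) 1 × Ioi (0 : ℝ) → ℝ :=
    fun q => φ q.1 * ((q.2 : ℝ) ^ p * exp (-(q.2 : ℝ) ^ 2))
  have hpolar : ∀ z : ({0}ᶜ : Set E), φ z * exp (-‖(z : E)‖ ^ 2) =
      G (homeomorphUnitSphereProd E z) := by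
    rintro ⟨z, hz⟩
    have hnorm : 0 < ‖z‖ := norm_pos_iff.2 hz
    have hscale : φ z = ‖z‖ ^ p * φ (‖z‖⁻¹ • z) := by
      rw [← hφ _ hnorm, smul_inv_smul₀ hnorm.ne']
    simp only [G, homeomorphUnitSphereProd_apply_fst_coe, homeomorphUnitSphereProd_apply_snd_coe,
      hscale]
    ring
  calc ∫ z, φ z * exp (-‖z‖ ^ 2)
      = ∫ z : ({0}ᶜ : Set E), φ z * exp (-‖(z : E)‖ ^ 2)
          ∂((volume : Measure E).comap Subtype.val) := by
        rw [integral_subtype_comap (measurableSet_singleton _).compl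
          (fun z => φ z * exp (-‖z‖ ^ 2)), restrict_compl_singleton]
    _ = ∫ q, G q ∂((volume : Measure E).toSphere.prod (Measure.volumeIoiPow (n - 1))) := by
        simp_rw [hpolar]
        exact (volume : Measure E).measurePreserving_homeomorphUnitSphereProd.integral_comp
          (Homeomorph.measurableEmbedding _) G
    _ = (∫ ξ : sphere (0 : E) 1, φ ξ ∂(volume : Measure E).toSphere) *
          ∫ t : Ioi (0 : ℝ), (t : ℝ) ^ p * exp (-(t : ℝ) ^ 2) ∂(Measure.volumeIoiPow (n - 1)) :=
        integral_prod_mul (fun ξ : sphere (0 : E) 1 => φ ξ)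
          (fun t : Ioi (0 : ℝ) => (t : ℝ) ^ p * exp (-(t : ℝ) ^ 2))
    _ = _ := by
        rw [integral_rpow_mul_exp_neg_sq_volumeIoiPow _ (by rwa [Nat.cast_pred hn, sub_add_cancel]),
          Nat.cast_pred hn]
        ring_nf

end InnerProductSpace

namespace EuclideanSpace

variable {d : ℕ}

lemma integral_comp_apply_mul_exp_neg_norm_sq (i : Fin d) (g : ℝ → ℝ) :
    ∫ z : EuclideanSpace ℝ (Fin d), g (z i) * exp (-‖z‖ ^ 2) =
      (∫ t : ℝ, g t * exp (-t ^ 2)) * √π ^ (d - 1) := by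
  have hprod : ∀ y : Fin d → ℝ,
      g (WithLp.toLp 2 y i) * exp (-‖WithLp.toLp 2 y‖ ^ 2) =
        ∏ j, (if j = i then g (y j) else 1) * exp (-y j ^ 2) := by
    intro y
    rw [Finset.prod_mul_distrib, Finset.prod_ite_eq' Finset.univ i, if_pos (Finset.mem_univ _),
      ← exp_sum, norm_sq_eq, ← Finset.sum_neg_distrib]
    simp only [norm_eq_abs, sq_abs]
  have hfactor : ∀ j : Fin d, ∫ t : ℝ, (if j = i then g t else 1) * exp (-t ^ 2) =
      if j = i then ∫ t : ℝ, g t * exp (-t ^ 2) else √π := by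
    intro j
    split_ifs
    · rfl
    · simpa using integral_gaussian 1
  rw [← (PiLp.volume_preserving_toLp (Fin d)).integral_comp
    (MeasurableEquiv.toLp 2 (Fin d → ℝ)).measurableEmbedding]
  simp_rw [hprod]
  rw [volume_pi, integral_fintype_prod_eq_prod
    (f := fun j t => (if j = i then g t else 1) * exp (-t ^ 2))]
  simp_rw [hfactor]
  rw [← Finset.mul_prod_erase _ _ (Finset.mem_univ i), if_pos rfl,
    Finset.prod_congr rfl (fun j hj => if_neg (Finset.ne_of_mem_erase hj)), Finset.prod_const,
    Finset.card_erase_of_mem (Finset.mem_univ _), Finset.card_univ, Fintype.card_fin]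

variable [NeZero d]

lemma integral_abs_inner_rpow_mul_exp_neg_norm_sq {p : ℝ} (hp : -1 < p)
    (x : EuclideanSpace ℝ (Fin d)) :
    ∫ z : EuclideanSpace ℝ (Fin d), |⟪z, x⟫| ^ p * exp (-‖z‖ ^ 2) =
      Gamma ((p + 1) / 2) * √π ^ (d - 1) * ‖x‖ ^ p := by
  have hnorm : ‖x‖ = ‖single (0 : Fin d) ‖x‖‖ := by simp
  have hinner : ∀ z : EuclideanSpace ℝ (Fin d), ⟪z, single 0 ‖x‖⟫ = ‖x‖ * z 0 := fun z => by
    simp [inner_single_right, mul_comm]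
  have hscale : ∀ t : ℝ, |‖x‖ * t| ^ p = ‖x‖ ^ p * |t| ^ p := fun t => by
    rw [abs_mul, abs_norm, mul_rpow (norm_nonneg _) (abs_nonneg _)]
  rw [integral_comp_inner_mul_exp_neg_norm_sq_of_norm_eq (fun s => |s| ^ p) hnorm]
  simp_rw [hinner]
  rw [integral_comp_apply_mul_exp_neg_norm_sq 0 (fun t => |‖x‖ * t| ^ p)]
  simp_rw [hscale, mul_assoc, integral_const_mul, integral_abs_rpow_mul_exp_neg_sq hp]
  ring

lemma integral_abs_inner_rpow_toSphere {p : ℝ} (hp : -1 < p) (x : EuclideanSpace ℝ (Fin d)) :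
    ∫ ξ : sphere (0 : EuclideanSpace ℝ (Fin d)) 1, |⟪(ξ : EuclideanSpace ℝ (Fin d)), x⟫| ^ p
        ∂(volume : Measure (EuclideanSpace ℝ (Fin d))).toSphere =
      2 * Gamma ((p + 1) / 2) * √π ^ (d - 1) / Gamma ((p + d) / 2) * ‖x‖ ^ p := by
  have hd : (1 : ℝ) ≤ d := by exact_mod_cast NeZero.one_le
  have hhom : ∀ t : ℝ, 0 < t → ∀ z : EuclideanSpace ℝ (Fin d),
      |⟪t • z, x⟫| ^ p = t ^ p * |⟪z, x⟫| ^ p := fun t ht z => by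
    rw [real_inner_smul_left, abs_mul, abs_of_pos ht, mul_rpow ht.le (abs_nonneg _)]
  have hpolar := integral_mul_exp_neg_norm_sq_of_homogeneous
    (by rw [finrank_euclideanSpace_fin]; linarith) (fun z => |⟪z, x⟫| ^ p) hhom
  rw [integral_abs_inner_rpow_mul_exp_neg_norm_sq hp, finrank_euclideanSpace_fin] at hpolar
  have hΓ : 0 < Gamma ((p + d) / 2) := Gamma_pos_of_pos (by linarith)
  field_simp
  linarith

lemma volume_toSphere_real_univ :
    (volume : Measure (EuclideanSpace ℝ (Fin d))).toSphere.real univ =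
      2 * √π ^ d / Gamma (d / 2) := by
  have h := integral_abs_inner_rpow_toSphere (d := d) neg_one_lt_zero 0
  simp only [rpow_zero, integral_const, smul_eq_mul, mul_one, zero_add, Gamma_one_half_eq] at h
  rw [h, mul_assoc 2, ← pow_succ', Nat.sub_add_cancel NeZero.one_le]

end EuclideanSpace

section uniformSphere

variable {d : ℕ} [NeZero d]

instance : IsProbabilityMeasure (uniformSphere d) := by
  have : NeZero (volume : Measure (EuclideanSpace ℝ (Fin d))).toSphere :=
    ⟨Measure.toSphere_ne_zero _⟩
  unfold uniformSphere
  infer_instance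

lemma integral_abs_inner_rpow_uniformSphere {p : ℝ} (hp : -1 < p)
    (x : EuclideanSpace ℝ (Fin d)) :
    ∫ ξ, |⟪(ξ : EuclideanSpace ℝ (Fin d)), x⟫| ^ p ∂(uniformSphere d) =
      Gamma ((p + 1) / 2) * Gamma (d / 2) / (√π * Gamma ((p + d) / 2)) * ‖x‖ ^ p := by
  have hd : (1 : ℝ) ≤ d := by exact_mod_cast NeZero.one_le
  rw [uniformSphere, integral_smul_measure, ENNReal.toReal_inv, ← measureReal_def,
    EuclideanSpace.volume_toSphere_real_univ, EuclideanSpace.integral_abs_inner_rpow_toSphere hp,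
    smul_eq_mul]
  have hsucc : √π ^ d = √π ^ (d - 1) * √π := by rw [← pow_succ, Nat.sub_add_cancel NeZero.one_le]
  have hΓ : 0 < Gamma ((p + d) / 2) := Gamma_pos_of_pos (by linarith)
  have hΓd : 0 < Gamma (d / 2) := Gamma_pos_of_pos (by linarith)
  have hπ : 0 < √π := sqrt_pos.2 pi_pos
  rw [hsucc]
  field_simp

end uniformSphere

lemma integral_sub_sq_of_integral_eq {Ω : Type*} [MeasurableSpace Ω] {μ : Measure Ω}
    [IsProbabilityMeasure μ] {Y : Ω → ℝ} (hY : MemLp Y 2 μ) {m : ℝ} (hm : ∫ ω, Y ω ∂μ = m) :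
    ∫ ω, (Y ω - m) ^ 2 ∂μ = ∫ ω, Y ω ^ 2 ∂μ - m ^ 2 := by
  rw [← hm, ← variance_eq_integral hY.aemeasurable, variance_eq_sub hY]
  rfl

noncomputable def slicedRieszConst (d : ℕ) (r : ℝ) : ℝ :=
  √π * Gamma ((d + r) / 2) / (Gamma (d / 2) * Gamma ((r + 1) / 2))

section slicedRieszConst

variable {d : ℕ} [NeZero d] {r : ℝ}

lemma integral_slicedRieszConst_mul_abs_inner_rpow (hr : -1 < r)
    (x : EuclideanSpace ℝ (Fin d)) :
    ∫ ξ, slicedRieszConst d r * |⟪(ξ : EuclideanSpace ℝ (Fin d)), x⟫| ^ r ∂(uniformSphere d) =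
      ‖x‖ ^ r := by
  have hd : (1 : ℝ) ≤ d := by exact_mod_cast NeZero.one_le
  have hΓd : 0 < Gamma (d / 2) := Gamma_pos_of_pos (by linarith)
  have hΓr : 0 < Gamma ((r + 1) / 2) := Gamma_pos_of_pos (by linarith)
  have hΓdr : 0 < Gamma ((r + d) / 2) := Gamma_pos_of_pos (by linarith)
  have hπ : 0 < √π := sqrt_pos.2 pi_pos
  rw [integral_const_mul, integral_abs_inner_rpow_uniformSphere hr, slicedRieszConst,
    add_comm (d : ℝ) r]
  field_simp

lemma integral_sq_slicedRieszConst_mul_abs_inner_rpow (hr : -1 / 2 < r)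
    (x : EuclideanSpace ℝ (Fin d)) :
    ∫ ξ, (slicedRieszConst d r * |⟪(ξ : EuclideanSpace ℝ (Fin d)), x⟫| ^ r) ^ 2
        ∂(uniformSphere d) =
      √π * Gamma (r + 1 / 2) * Gamma ((d + r) / 2) ^ 2 /
        (Gamma ((r + 1) / 2) ^ 2 * Gamma (d / 2) * Gamma (r + d / 2)) * (‖x‖ ^ r) ^ 2 := by
  have hd : (1 : ℝ) ≤ d := by exact_mod_cast NeZero.one_le
  have hΓd : 0 < Gamma (d / 2) := Gamma_pos_of_pos (by linarith)
  have hΓr : 0 < Gamma ((r + 1) / 2) := Gamma_pos_of_pos (by linarith)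
  have hΓ2r : 0 < Gamma (r + d / 2) := Gamma_pos_of_pos (by linarith)
  have hπ : 0 < √π := sqrt_pos.2 pi_pos
  have hsq : ∀ t : ℝ, 0 ≤ t → (t ^ r) ^ 2 = t ^ (2 * r) := fun t ht => by
    rw [mul_comm, rpow_mul ht, rpow_two]
  simp only [mul_pow, hsq _ (abs_nonneg _), hsq _ (norm_nonneg x), integral_const_mul]
  rw [integral_abs_inner_rpow_uniformSphere (by linarith), slicedRieszConst,
    show (2 * r + 1) / 2 = r + 1 / 2 by ring, show (2 * r + d) / 2 = r + d / 2 by ring]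
  field_simp

end slicedRieszConst

theorem variance_riesz_kernel_general (d : ℕ) (hd : 2 ≤ d) (r : ℝ) (hr : 0 < r)
    (F f : ℝ → ℝ) (hF : ∀ t : ℝ, F t = -(t ^ r))
    (hf : ∀ t : ℝ, f t =
      -((Real.sqrt π * Gamma (((d : ℝ) + r) / 2) /
        (Gamma ((d : ℝ) / 2) * Gamma ((r + 1) / 2))) * t ^ r))
    (x : EuclideanSpace ℝ (Fin d)) :
    ∫ ξ : Metric.sphere (0 : EuclideanSpace ℝ (Fin d)) 1,
        (f |⟪(ξ : EuclideanSpace ℝ (Fin d)), x⟫| - F ‖x‖) ^ 2 ∂(uniformSphere d) =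
      (Real.sqrt π * Gamma (r + 1/2) * Gamma (((d : ℝ) + r) / 2) ^ 2 /
          (Gamma ((r + 1) / 2) ^ 2 * Gamma ((d : ℝ) / 2) * Gamma (r + (d : ℝ) / 2)) - 1) *
        F ‖x‖ ^ 2 := by
  have : NeZero d := ⟨by omega⟩
  have hf' : ∀ t, f t = -(slicedRieszConst d r * t ^ r) := hf
  set Y := fun ξ : sphere (0 : EuclideanSpace ℝ (Fin d)) 1 =>
    f |⟪(ξ : EuclideanSpace ℝ (Fin d)), x⟫|
  have hY : MemLp Y 2 (uniformSphere d) := by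
    have hcont : Continuous Y := by
      simp only [Y, hf']
      fun_prop (disch := exact hr.le)
    exact (ContinuousMap.mk Y hcont).memLp _ ℝ
  have hmean : ∫ ξ, Y ξ ∂(uniformSphere d) = F ‖x‖ := by
    simp only [Y, hf', hF, integral_neg,
      integral_slicedRieszConst_mul_abs_inner_rpow (by linarith : -1 < r)]
  rw [integral_sub_sq_of_integral_eq hY hmean]
  simp only [Y, hf', hF, neg_sq,
    integral_sq_slicedRieszConst_mul_abs_inner_rpow (by linarith : -1 / 2 < r)]
  ring

theorem variance_riesz_kernel (d : ℕ) (hd : 2 ≤ d) (r : ℝ) (hr : 0 < r)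
    (F f : ℝ → ℝ) (hF : ∀ t : ℝ, F t = -(t ^ r))
    (hf : ∀ t : ℝ, f t =
      -((Real.sqrt π * Gamma (((d : ℝ) + r) / 2) /
        (Gamma ((d : ℝ) / 2) * Gamma ((r + 1) / 2))) * t ^ r))
    (x : EuclideanSpace ℝ (Fin d)) (hx : x ≠ 0) :
    ∫ ξ : Metric.sphere (0 : EuclideanSpace ℝ (Fin d)) 1,
        (f |⟪(ξ : EuclideanSpace ℝ (Fin d)), x⟫| - F ‖x‖) ^ 2 ∂(uniformSphere d) =
      (Real.sqrt π * Gamma (r + 1/2) * Gamma (((d : ℝ) + r) / 2) ^ 2 /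
          (Gamma ((r + 1) / 2) ^ 2 * Gamma ((d : ℝ) / 2) * Gamma (r + (d : ℝ) / 2)) - 1) *
        F ‖x‖ ^ 2 :=
  variance_riesz_kernel_general d hd r hr F f hF hf x
end

section
/- For the 3-dimensional sliced Laplace kernel: let F(t) = exp(−αt) with α > 0 and f be the one-dimensional basis function satisfying the slicing relation in dimension d = 3. Then for x ∈ ℝ³, x ≠ 0, the variance V(x) = E_{ξ∼U(S²)}[(f(|⟨ξ,x⟩|) − F(‖x‖))²] equals (1/(4α‖x‖)) · (1 − (2α²‖x‖² + 2α‖x‖ + 1) e^{−2α‖x‖}). -/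
open Real MeasureTheory RealInnerProductSpace

/-!
In dimension 3 the projection `⟪ξ, u⟫` of a uniform point of the sphere onto a unit
vector is uniform on `[-1, 1]` (Archimedes), so `|⟪ξ, x⟫| = ‖x‖ |⟪ξ, u⟫|` with `|⟪ξ, u⟫|` uniform
on `[0, 1]`. Since the series defining `f` sums to `(1 - α t) e^{-α t}`, the variance becomes the
elementary integral `∫₀¹ ((1 - s t) e^{-s t} - e^{-s})² dt` with `s = α ‖x‖`.

Uniformity is proved through moments. Integrating `|⟪y, u⟫|^m e^{-‖y‖²}` over `ℝ^d` once in
Cartesian and once in polar coordinates computes the moments of `|⟪ξ, u⟫|`; for `d = 3` they are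
`1 / (m + 1)`, the moments of the uniform law on `[0, 1]`. Both variables are bounded, so their
moment generating functions are entire with the same Taylor coefficients at `0`, and the laws agree.
-/

open Set Metric ProbabilityTheory
open scoped Nat

local notation "ℝ³" => EuclideanSpace ℝ (Fin 3)

namespace ProbabilityTheory

variable {Ω Ω' : Type*} {mΩ : MeasurableSpace Ω} {mΩ' : MeasurableSpace Ω'}
  {μ : Measure Ω} {μ' : Measure Ω'} {X : Ω → ℝ} {Y : Ω' → ℝ}

lemma integrableExpSet_eq_univ_of_ae_abs_le [IsFiniteMeasure μ] (hX : AEStronglyMeasurable X μ)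
    {C : ℝ} (hC : ∀ᵐ ω ∂μ, |X ω| ≤ C) : integrableExpSet X μ = univ := by
  refine eq_univ_of_forall fun t ↦ Integrable.of_bound (by fun_prop) (exp (|t| * C)) ?_
  filter_upwards [hC] with ω hω
  rw [norm_of_nonneg (exp_pos _).le, exp_le_exp]
  calc t * X ω ≤ |t| * |X ω| := (le_abs_self _).trans (abs_mul _ _).le
    _ ≤ |t| * C := by gcongr

lemma mgf_eq_of_moment_eq (hX : integrableExpSet X μ = univ) (hY : integrableExpSet Y μ' = univ)
    (h : ∀ n : ℕ, ∫ ω, X ω ^ n ∂μ = ∫ ω, Y ω ^ n ∂μ') : mgf X μ = mgf Y μ' := by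
  have hX₀ : (0 : ℝ) ∈ interior (integrableExpSet X μ) := by simp [hX]
  have hY₀ : (0 : ℝ) ∈ interior (integrableExpSet Y μ') := by simp [hY]
  have hsub := (hasFPowerSeriesAt_mgf hX₀).sub (hasFPowerSeriesAt_mgf hY₀)
  simp only [zero_mul, exp_zero, mul_one, h, sub_self] at hsub
  refine AnalyticOnNhd.eq_of_eventuallyEq (𝕜 := ℝ) (z₀ := 0) ?_ ?_ ?_
  · simpa [hX] using analyticOnNhd_mgf (X := X) (μ := μ)
  · simpa [hY] using analyticOnNhd_mgf (X := Y) (μ := μ')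
  · filter_upwards [hsub.eventually_eq_zero] with t ht using sub_eq_zero.mp ht

lemma _root_.MeasureTheory.Measure.map_eq_of_moment_eq [IsProbabilityMeasure μ]
    [IsFiniteMeasure μ'] (hXm : AEMeasurable X μ) (hYm : AEMeasurable Y μ')
    (hX : integrableExpSet X μ = univ) (hY : integrableExpSet Y μ' = univ)
    (h : ∀ n : ℕ, ∫ ω, X ω ^ n ∂μ = ∫ ω, Y ω ^ n ∂μ') : μ.map X = μ'.map Y :=
  Measure.ext_of_complexMGF_eq hXm hYm <| funext fun _ ↦
    eqOn_complexMGF_of_mgf (mgf_eq_of_moment_eq hX hY h) (by simp [hX])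

end ProbabilityTheory

namespace MeasureTheory.Measure

lemma integral_volumeIoiPow (n : ℕ) (g : ℝ → ℝ) :
    ∫ r, g r ∂volumeIoiPow n = ∫ r in Ioi (0 : ℝ), r ^ n * g r := by
  simp only [volumeIoiPow, ENNReal.ofReal]
  rw [integral_withDensity_eq_integral_smul (measurable_subtype_coe.pow_const n).real_toNNReal,
    integral_subtype_comap measurableSet_Ioi fun r ↦ (r ^ n).toNNReal • g r]
  refine setIntegral_congr_fun measurableSet_Ioi fun r hr ↦ ?_
  rw [NNReal.smul_def, Real.coe_toNNReal _ (pow_nonneg (le_of_lt hr) n), smul_eq_mul]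

variable {E : Type*} [NormedAddCommGroup E] [NormedSpace ℝ E] [Nontrivial E]
  [FiniteDimensional ℝ E] [MeasurableSpace E] [BorelSpace E] (μ : Measure E) [μ.IsAddHaarMeasure]

theorem integral_homogeneous_mul_radial {m : ℕ} {F : E → ℝ}
    (hF : ∀ (c : ℝ) (y : E), 0 < c → F (c • y) = c ^ m * F y) (G : ℝ → ℝ) :
    ∫ y, F y * G ‖y‖ ∂μ =
      (∫ ξ : sphere (0 : E) 1, F ξ ∂μ.toSphere) *
        ∫ r in Ioi (0 : ℝ), r ^ (Module.finrank ℝ E - 1 + m) * G r := by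
  calc ∫ y, F y * G ‖y‖ ∂μ
      = ∫ y : ({0}ᶜ : Set E), F y * G ‖(y : E)‖ ∂μ.comap Subtype.val := by
        rw [integral_subtype_comap (measurableSet_singleton _).compl fun y ↦ F y * G ‖y‖,
          restrict_compl_singleton]
    _ = ∫ p : sphere (0 : E) 1 × Ioi (0 : ℝ), F p.1 * ((p.2 : ℝ) ^ m * G p.2)
          ∂μ.toSphere.prod (volumeIoiPow (Module.finrank ℝ E - 1)) := by
        rw [← μ.measurePreserving_homeomorphUnitSphereProd.integral_comp
          (Homeomorph.measurableEmbedding _)]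
        congr 1 with ⟨y, hy⟩
        have hy : 0 < ‖y‖ := norm_pos_iff.mpr hy
        simp only [homeomorphUnitSphereProd_apply_fst_coe, homeomorphUnitSphereProd_apply_snd_coe]
        rw [← mul_assoc, mul_comm (F (_ • y)), ← hF _ _ hy, smul_inv_smul₀ hy.ne']
    _ = _ := by
        rw [integral_prod_mul (fun ξ : sphere (0 : E) 1 ↦ F ξ)
            fun r : Ioi (0 : ℝ) ↦ (r : ℝ) ^ m * G r,
          integral_volumeIoiPow _ fun r ↦ r ^ m * G r]
        simp_rw [pow_add, mul_assoc]

end MeasureTheory.Measure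

lemma integral_Ioi_pow_mul_exp_neg_sq (k : ℕ) :
    ∫ t in Ioi (0 : ℝ), t ^ k * exp (-t ^ 2) = Gamma ((k + 1) / 2) / 2 := by
  have h := integral_rpow_mul_exp_neg_rpow two_pos
    (by linarith [k.cast_nonneg (α := ℝ)] : (-1 : ℝ) < k)
  norm_num [Real.rpow_natCast] at h
  rw [h]
  ring

lemma integral_abs_pow_mul_exp_neg_sq (m : ℕ) :
    ∫ t : ℝ, |t| ^ m * exp (-t ^ 2) = Gamma ((m + 1) / 2) := by
  have h := integral_comp_abs (f := fun t ↦ t ^ m * exp (-t ^ 2))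
  simp only [sq_abs] at h
  rw [h, integral_Ioi_pow_mul_exp_neg_sq]
  ring

lemma integral_comp_inner_norm_eq_of_norm_eq {E : Type*} [NormedAddCommGroup E]
    [InnerProductSpace ℝ E] [FiniteDimensional ℝ E] [MeasurableSpace E] [BorelSpace E]
    (g : ℝ → ℝ → ℝ) {u v : E} (huv : ‖u‖ = ‖v‖) :
    ∫ y, g ⟪y, u⟫ ‖y‖ = ∫ y, g ⟪y, v⟫ ‖y‖ := by
  set e : E ≃ₗᵢ[ℝ] E := Submodule.reflection (ℝ ∙ (v - u))ᗮ
  have he : e v = u := Submodule.reflection_sub huv.symm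
  rw [← e.measurePreserving.integral_comp e.toMeasurableEquiv.measurableEmbedding]
  simp [← he, e.inner_map_map, e.norm_map]

section SphereMoments

variable (n m : ℕ)

lemma EuclideanSpace.integral_abs_apply_zero_pow_mul_exp_neg_norm_sq :
    ∫ y : EuclideanSpace ℝ (Fin (n + 1)), |y 0| ^ m * exp (-‖y‖ ^ 2) =
      Gamma ((m + 1) / 2) * √π ^ n := by
  rw [← (EuclideanSpace.volume_preserving_symm_measurableEquiv_toLp _).symm.integral_comp
    (MeasurableEquiv.measurableEmbedding _)]
  let g : Fin (n + 1) → ℝ → ℝ := Fin.cons (fun t ↦ |t| ^ m * exp (-t ^ 2)) fun _ t ↦ exp (-t ^ 2)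
  have hg (w : Fin (n + 1) → ℝ) :
      ∏ i, g i (w i) = |w 0| ^ m * exp (-‖WithLp.toLp 2 w‖ ^ 2) := by
    simp [g, Fin.prod_univ_succ, EuclideanSpace.norm_sq_eq, Fin.sum_univ_succ, exp_add,
      ← Finset.sum_neg_distrib, exp_sum]
    ring
  simp_rw [MeasurableEquiv.symm_symm, MeasurableEquiv.coe_toLp, ← hg]
  rw [integral_fintype_prod_volume_eq_prod, Fin.prod_univ_succ]
  have hgauss : ∫ t : ℝ, exp (-t ^ 2) = √π := by simpa using integral_gaussian 1
  simp [g, integral_abs_pow_mul_exp_neg_sq, hgauss]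

variable {n} {u : EuclideanSpace ℝ (Fin (n + 1))}

lemma integral_abs_inner_pow_mul_exp_neg_norm_sq (hu : ‖u‖ = 1) :
    ∫ y, |⟪y, u⟫| ^ m * exp (-‖y‖ ^ 2) = Gamma ((m + 1) / 2) * √π ^ n := by
  rw [integral_comp_inner_norm_eq_of_norm_eq (fun a b ↦ |a| ^ m * exp (-b ^ 2))
    (hu.trans (by simp : ‖EuclideanSpace.single (0 : Fin (n + 1)) (1 : ℝ)‖ = 1).symm)]
  simpa [EuclideanSpace.inner_single_right] using
    EuclideanSpace.integral_abs_apply_zero_pow_mul_exp_neg_norm_sq n m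

lemma integral_abs_inner_pow_toSphere (hu : ‖u‖ = 1) :
    ∫ ξ : sphere (0 : EuclideanSpace ℝ (Fin (n + 1))) 1,
        |⟪(ξ : EuclideanSpace ℝ (Fin (n + 1))), u⟫| ^ m ∂volume.toSphere =
      2 * Gamma ((m + 1) / 2) * √π ^ n / Gamma ((m + n + 1) / 2) := by
  have hpolar := volume.integral_homogeneous_mul_radial (m := m)
    (F := fun y : EuclideanSpace ℝ (Fin (n + 1)) ↦ |⟪y, u⟫| ^ m)
    (fun c y hc ↦ by rw [real_inner_smul_left, abs_mul, mul_pow, abs_of_pos hc])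
    (fun r ↦ exp (-r ^ 2))
  rw [integral_abs_inner_pow_mul_exp_neg_norm_sq m hu, finrank_euclideanSpace_fin,
    integral_Ioi_pow_mul_exp_neg_sq] at hpolar
  have hΓ : Gamma ((m + n + 1) / 2) ≠ 0 := (Gamma_pos_of_pos (by positivity)).ne'
  rw [Nat.add_sub_cancel, show ((n + m : ℕ) : ℝ) + 1 = m + n + 1 by push_cast; ring] at hpolar
  rw [eq_div_iff hΓ, mul_assoc, hpolar]
  ring

instance isProbabilityMeasure_uniformSphere (d : ℕ) [NeZero d] :
    IsProbabilityMeasure (uniformSphere d) := by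
  constructor
  rw [uniformSphere, Measure.smul_apply, smul_eq_mul]
  exact ENNReal.inv_mul_cancel (Measure.measure_univ_eq_zero.not.mpr (Measure.toSphere_ne_zero _))
    (measure_ne_top _ _)

lemma integral_abs_inner_pow_uniformSphere (hu : ‖u‖ = 1) :
    ∫ ξ, |⟪(ξ : EuclideanSpace ℝ (Fin (n + 1))), u⟫| ^ m ∂uniformSphere (n + 1) =
      Gamma ((m + 1) / 2) * Gamma ((n + 1) / 2) / (√π * Gamma ((m + n + 1) / 2)) := by
  have harea : (volume : Measure (EuclideanSpace ℝ (Fin (n + 1)))).toSphere.real univ =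
      2 * √π ^ (n + 1) / Gamma ((n + 1) / 2) := by
    have h := integral_abs_inner_pow_toSphere 0 hu
    simp only [pow_zero, integral_const, smul_eq_mul, mul_one, Nat.cast_zero, zero_add] at h
    rw [h, Gamma_one_half_eq]
    ring
  have hΓ : Gamma ((n + 1) / 2) ≠ 0 := (Gamma_pos_of_pos (by positivity)).ne'
  have hΓ' : Gamma ((m + n + 1) / 2) ≠ 0 := (Gamma_pos_of_pos (by positivity)).ne'
  rw [uniformSphere, integral_smul_measure, ENNReal.toReal_inv, ← measureReal_def, harea,
    integral_abs_inner_pow_toSphere m hu, smul_eq_mul]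
  field_simp
  ring

end SphereMoments

lemma integral_abs_inner_pow_uniformSphere_three (m : ℕ) {u : ℝ³} (hu : ‖u‖ = 1) :
    ∫ ξ, |⟪(ξ : ℝ³), u⟫| ^ m ∂uniformSphere 3 = 1 / (m + 1) := by
  have hm : ((m : ℝ) + 1) / 2 ≠ 0 := by positivity
  have hΓ : Gamma ((m + 1) / 2) ≠ 0 := (Gamma_pos_of_pos (by positivity)).ne'
  rw [integral_abs_inner_pow_uniformSphere m hu, Nat.cast_ofNat,
    show ((m : ℝ) + 2 + 1) / 2 = (m + 1) / 2 + 1 by ring, Gamma_add_one hm,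
    show ((2 : ℝ) + 1) / 2 = 1 / 2 + 1 by norm_num, Gamma_add_one (by norm_num), Gamma_one_half_eq]
  field_simp

/-- Archimedes' hat-box theorem. -/
theorem map_abs_inner_uniformSphere_three {u : ℝ³} (hu : ‖u‖ = 1) :
    (uniformSphere 3).map (fun ξ : sphere (0 : ℝ³) 1 ↦ |⟪(ξ : ℝ³), u⟫|) =
      volume.restrict (Ioc (0 : ℝ) 1) := by
  have hcont : Continuous fun ξ : sphere (0 : ℝ³) 1 ↦ |⟪(ξ : ℝ³), u⟫| := by fun_prop
  have hbound (ξ : sphere (0 : ℝ³) 1) : |⟪(ξ : ℝ³), u⟫| ≤ 1 := by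
    simpa [hu] using abs_real_inner_le_norm (ξ : ℝ³) u
  rw [← Measure.map_id (μ := volume.restrict (Ioc (0 : ℝ) 1))]
  refine Measure.map_eq_of_moment_eq hcont.aemeasurable aemeasurable_id
    (integrableExpSet_eq_univ_of_ae_abs_le hcont.aestronglyMeasurable
      (.of_forall fun ξ ↦ (abs_abs _).trans_le (hbound ξ)))
    (integrableExpSet_eq_univ_of_ae_abs_le aestronglyMeasurable_id
      ((ae_restrict_iff' measurableSet_Ioc).mpr
        (.of_forall fun t ht ↦ (abs_of_pos ht.1).trans_le ht.2))) fun n ↦ ?_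
  rw [integral_abs_inner_pow_uniformSphere_three n hu,
    ← intervalIntegral.integral_of_le zero_le_one]
  simp [integral_pow]

theorem integral_comp_abs_inner_uniformSphere_three {u : ℝ³} (hu : ‖u‖ = 1) {g : ℝ → ℝ}
    (hg : Measurable g) :
    ∫ ξ, g |⟪(ξ : ℝ³), u⟫| ∂uniformSphere 3 = ∫ t in (0 : ℝ)..1, g t := by
  rw [intervalIntegral.integral_of_le zero_le_one, ← map_abs_inner_uniformSphere_three hu,
    integral_map (by fun_prop) hg.aestronglyMeasurable]

lemma hasSum_add_one_mul_pow_div_factorial (x : ℝ) :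
    HasSum (fun n : ℕ ↦ ((n : ℝ) + 1) * x ^ n / n !) ((1 + x) * exp x) := by
  have hexp : HasSum (fun n : ℕ ↦ x ^ n / n !) (exp x) := by
    simpa [← exp_eq_exp_ℝ] using NormedSpace.expSeries_div_hasSum_exp x
  have hshift : HasSum (fun n : ℕ ↦ (n : ℝ) * x ^ n / n !) (x * exp x) := by
    refine (hasSum_nat_add_iff' 1).mp ?_
    have hf : (fun n : ℕ ↦ ((n : ℝ) + 1) * x ^ (n + 1) / (n + 1)!) =
        fun n ↦ x * (x ^ n / n !) := by
      ext n
      rw [Nat.factorial_succ, Nat.cast_mul, Nat.cast_succ]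
      field_simp
      ring
    simpa [hf] using hexp.mul_left x
  have hsplit : (fun n : ℕ ↦ ((n : ℝ) + 1) * x ^ n / n !) =
      fun n ↦ x ^ n / n ! + (n : ℝ) * x ^ n / n ! := by
    ext n
    ring
  rw [hsplit, add_mul, one_mul]
  exact hexp.add hshift

lemma integral_sq_one_sub_mul_mul_exp_sub_exp {s : ℝ} (hs : s ≠ 0) :
    ∫ t in (0 : ℝ)..1, ((1 - s * t) * exp (-(s * t)) - exp (-s)) ^ 2 =
      1 / (4 * s) * (1 - (2 * s ^ 2 + 2 * s + 1) * exp (-(2 * s))) := by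
  have hderiv (t : ℝ) : HasDerivAt
      (fun t ↦ (-1 / (4 * s) + t / 2 - s * t ^ 2 / 2) * exp (-(s * t)) ^ 2
        - 2 * exp (-s) * t * exp (-(s * t)) + exp (-s) ^ 2 * t)
      (((1 - s * t) * exp (-(s * t)) - exp (-s)) ^ 2) t := by
    have hE : HasDerivAt (fun t ↦ exp (-(s * t))) (-s * exp (-(s * t))) t := by
      simpa [mul_comm] using ((hasDerivAt_id t).const_mul s).neg.exp
    refine (((((((hasDerivAt_id t).div_const 2).const_add (-1 / (4 * s))).sub
      (((hasDerivAt_pow 2 t).const_mul s).div_const 2)).mul (hE.pow 2)).sub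
      (((hasDerivAt_id t).const_mul (2 * exp (-s))).mul hE)).add
      ((hasDerivAt_id t).const_mul (exp (-s) ^ 2))).congr_deriv ?_
    simp only [id, Pi.pow_apply, Pi.sub_apply, Nat.cast_ofNat]
    field_simp
    ring
  rw [intervalIntegral.integral_eq_sub_of_hasDerivAt (fun t _ ↦ hderiv t)
    (Continuous.intervalIntegrable (by fun_prop) _ _)]
  have h2 : exp (-(2 * s)) = exp (-s) ^ 2 := by rw [← exp_nat_mul]; ring_nf
  simp only [mul_one, mul_zero, neg_zero, exp_zero, h2]
  field_simp
  ring

theorem variance_laplace_kernel_dim3 (α : ℝ) (hα : 0 < α) (f : ℝ → ℝ)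
    (hf : ∀ t : ℝ, f t = ∑' n : ℕ, ((n : ℝ) + 1) * (-(α * t)) ^ n / n.factorial)
    (x : EuclideanSpace ℝ (Fin 3)) (hx : x ≠ 0) :
    ∫ ξ : Metric.sphere (0 : EuclideanSpace ℝ (Fin 3)) 1,
        (f |⟪(ξ : EuclideanSpace ℝ (Fin 3)), x⟫| - Real.exp (-(α * ‖x‖))) ^ 2
          ∂(uniformSphere 3) =
      1 / (4 * α * ‖x‖) *
        (1 - (2 * α ^ 2 * ‖x‖ ^ 2 + 2 * α * ‖x‖ + 1) * Real.exp (-(2 * α * ‖x‖))) := by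
  have hf' (t : ℝ) : f t = (1 - α * t) * exp (-(α * t)) := by
    rw [hf, (hasSum_add_one_mul_pow_div_factorial _).tsum_eq]
    ring
  set u : ℝ³ := ‖x‖⁻¹ • x
  have hu : ‖u‖ = 1 := norm_smul_inv_norm hx
  have hinner (y : ℝ³) : |⟪y, x⟫| = ‖x‖ * |⟪y, u⟫| := by
    rw [real_inner_smul_right, abs_mul, abs_inv, abs_norm,
      mul_inv_cancel_left₀ (norm_ne_zero_iff.mpr hx)]
  let g (t : ℝ) : ℝ := ((1 - α * ‖x‖ * t) * exp (-(α * ‖x‖ * t)) - exp (-(α * ‖x‖))) ^ 2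
  calc _ = ∫ ξ, g |⟪(ξ : ℝ³), u⟫| ∂uniformSphere 3 := by
        simp only [g, hf', hinner, mul_assoc]
    _ = ∫ t in (0 : ℝ)..1, g t := integral_comp_abs_inner_uniformSphere_three hu (by fun_prop)
    _ = _ := by
        rw [integral_sq_one_sub_mul_mul_exp_sub_exp (mul_pos hα (norm_pos_iff.mpr hx)).ne']
        ring_nf
end

section
/- The power series identity: Σ_{n=0}^∞ Σ_{k=0}^n (k(n−k)/(n+1)) · (1/(k!(n−k)!)) · (−t)^n = (e^{−2t}/(4t)) · (e^{2t} − (2t² + 2t + 1)) for all t > 0. -/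
/-!
The inner sum is a binomial sum: `k (n - k) / (k! (n - k)!) = 1 / ((k - 1)! (n - k - 1)!)`, so it
equals `n (n - 1) 2^(n-2) / n!`. With `x = -2t` the `n`-th term becomes
`n (n - 1) x^(n+1) / (4x (n + 1)!)`, and writing `(m - 1)(m - 2)` in the falling-factorial basis
`m^(2) - 2 m^(1) + 2` gives `∑ (m - 1)(m - 2) x^m / m! = (x² - 2x + 2) eˣ`, whose tail from `m = 1`
is the series in question.
-/

open Finset Real
open scoped Nat

section BinomialSums

variable {K : Type*} [Field K] [CharZero K]

theorem sum_range_one_div_factorial_mul_factorial (n : ℕ) :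
    ∑ k ∈ range (n + 1), 1 / ((k ! : K) * (n - k)!) = 2 ^ n / n ! := by
  have hchoose : ∀ k ∈ range (n + 1), 1 / ((k ! : K) * (n - k)!) = (n.choose k : K) / n ! := by
    intro k hk
    rw [Nat.cast_choose K (Nat.lt_succ_iff.mp (mem_range.mp hk)),
      div_div_cancel_left' (Nat.cast_ne_zero.mpr n.factorial_ne_zero), one_div]
  rw [sum_congr rfl hchoose, ← sum_div, ← Nat.cast_sum, Nat.sum_range_choose, Nat.cast_pow,
    Nat.cast_two]

theorem succ_mul_succ_div_factorial_mul_factorial (i j : ℕ) :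
    ((i + 1 : ℕ) : K) * ((j + 1 : ℕ) : K) / ((i + 1)! * (j + 1)!) = 1 / (i ! * j !) := by
  simp only [Nat.factorial_succ, Nat.cast_mul]
  field_simp

theorem sum_range_mul_sub_div_factorial_mul_factorial (n : ℕ) :
    ∑ k ∈ range (n + 1), (k : K) * (n - k) / (k ! * (n - k)!) = n * (n - 1) * 2 ^ n / (4 * n !) := by
  obtain _ | _ | m := n
  · simp
  · simp [sum_range_succ]
  have hinner : ∀ i ∈ range (m + 1), ((i + 1 : ℕ) : K) * ((m + 2 : ℕ) - (i + 1 : ℕ)) /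
      ((i + 1)! * (m + 2 - (i + 1))!) = 1 / (i ! * (m - i)!) := by
    intro i hi
    have hsub : m + 2 - (i + 1) = m - i + 1 := by have := mem_range.mp hi; omega
    rw [← Nat.cast_sub (by omega), hsub, succ_mul_succ_div_factorial_mul_factorial]
  rw [sum_range_succ, sum_range_succ', sum_congr rfl hinner,
    sum_range_one_div_factorial_mul_factorial]
  simp only [Nat.factorial_succ, Nat.cast_mul, Nat.cast_zero, sub_self, zero_mul, mul_zero,
    zero_div, add_zero]
  have hm1 : (m : K) + 1 ≠ 0 := Nat.cast_add_one_ne_zero m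
  have hm2 : (m : K) + 1 + 1 ≠ 0 := by exact_mod_cast Nat.succ_ne_zero (m + 1)
  have hfac : (m ! : K) ≠ 0 := Nat.cast_ne_zero.mpr m.factorial_ne_zero
  push_cast
  field_simp
  ring

end BinomialSums

theorem hasSum_descFactorial_mul_pow_div_factorial (j : ℕ) (x : ℝ) :
    HasSum (fun m : ℕ => (m.descFactorial j : ℝ) * x ^ m / m !) (x ^ j * exp x) := by
  refine (hasSum_nat_add_iff' j).mp ?_
  have hhead : ∑ i ∈ range j, ((i.descFactorial j : ℕ) : ℝ) * x ^ i / i ! = 0 :=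
    sum_eq_zero fun i hi => by
      rw [Nat.descFactorial_eq_zero_iff_lt.mpr (mem_range.mp hi)]
      simp
  have hshift : ∀ i : ℕ, (((i + j).descFactorial j : ℕ) : ℝ) * x ^ (i + j) / (i + j)! =
      x ^ j * (x ^ i / i !) := by
    intro i
    have hfac := Nat.factorial_mul_descFactorial (Nat.le_add_left j i)
    rw [Nat.add_sub_cancel] at hfac
    rw [← hfac, Nat.cast_mul]
    field_simp
    ring
  rw [hhead, sub_zero, funext hshift, exp_eq_exp_ℝ]
  exact (NormedSpace.expSeries_div_hasSum_exp x).mul_left _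

theorem hasSum_sub_one_mul_sub_two_mul_pow_div_factorial (x : ℝ) :
    HasSum (fun m : ℕ => ((m : ℝ) - 1) * (m - 2) * x ^ m / m !) ((x ^ 2 - 2 * x + 2) * exp x) := by
  have hbasis : ∀ m : ℕ, ((m : ℝ) - 1) * (m - 2) * x ^ m / m ! =
      (m.descFactorial 2 : ℝ) * x ^ m / (m ! : ℝ) - 2 * ((m.descFactorial 1 : ℝ) * x ^ m / m !) +
        2 * ((m.descFactorial 0 : ℝ) * x ^ m / m !) := fun m => by
    rw [Nat.cast_descFactorial_two, Nat.descFactorial_one, Nat.descFactorial_zero, Nat.cast_one]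
    ring
  have hsum : (x ^ 2 - 2 * x + 2) * exp x =
      x ^ 2 * exp x - 2 * (x ^ 1 * exp x) + 2 * (x ^ 0 * exp x) := by ring
  rw [funext hbasis, hsum]
  exact ((hasSum_descFactorial_mul_pow_div_factorial 2 x).sub
    ((hasSum_descFactorial_mul_pow_div_factorial 1 x).mul_left 2)).add
    ((hasSum_descFactorial_mul_pow_div_factorial 0 x).mul_left 2)

theorem hasSum_mul_sub_one_mul_pow_succ_div_factorial (x : ℝ) :
    HasSum (fun n : ℕ => (n : ℝ) * (n - 1) * x ^ (n + 1) / (n + 1)!)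
      ((x ^ 2 - 2 * x + 2) * exp x - 2) := by
  have hshift : ∀ n : ℕ, (n : ℝ) * (n - 1) * x ^ (n + 1) / (n + 1)! =
      (((n + 1 : ℕ) : ℝ) - 1) * ((n + 1 : ℕ) - 2) * x ^ (n + 1) / (n + 1)! := fun n => by
    push_cast
    ring
  have hhead : ∑ i ∈ range 1, ((i : ℝ) - 1) * (i - 2) * x ^ i / i ! = 2 := by norm_num
  have h := (hasSum_nat_add_iff' 1).mpr (hasSum_sub_one_mul_sub_two_mul_pow_div_factorial x)
  rwa [hhead, ← funext hshift] at h

theorem laplace_variance_series (t : ℝ) (ht : 0 < t) :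
    ∑' n : ℕ, (∑ k ∈ Finset.range (n + 1),
        ((k : ℝ) * ((n : ℝ) - k) / ((n : ℝ) + 1)) *
          (1 / ((k.factorial : ℝ) * ((n - k).factorial : ℝ)))) * (-t) ^ n =
      Real.exp (-2 * t) / (4 * t) * (Real.exp (2 * t) - (2 * t ^ 2 + 2 * t + 1)) := by
  have ht0 : t ≠ 0 := ht.ne'
  have hterm : ∀ n : ℕ, (∑ k ∈ range (n + 1), ((k : ℝ) * ((n : ℝ) - k) / ((n : ℝ) + 1)) *
      (1 / ((k ! : ℝ) * ((n - k)! : ℝ)))) * (-t) ^ n =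
      (n : ℝ) * (n - 1) * (-2 * t) ^ (n + 1) / (n + 1)! / (4 * (-2 * t)) := by
    intro n
    have hinner : ∑ k ∈ range (n + 1), ((k : ℝ) * ((n : ℝ) - k) / ((n : ℝ) + 1)) *
        (1 / ((k ! : ℝ) * ((n - k)! : ℝ))) = n * (n - 1) * 2 ^ n / (4 * n !) / (n + 1) := by
      rw [← sum_range_mul_sub_div_factorial_mul_factorial, sum_div]
      exact sum_congr rfl fun k _ => by ring
    rw [hinner, Nat.factorial_succ, Nat.cast_mul, pow_succ, neg_mul, neg_pow t, neg_pow (2 * t),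
      mul_pow]
    push_cast
    field_simp
  rw [tsum_congr hterm, ((hasSum_mul_sub_one_mul_pow_succ_div_factorial _).div_const _).tsum_eq,
    show 2 * t = -(-2 * t) by ring, exp_neg]
  field_simp
  ring
end
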